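/- Let $\mathcal{L}$ be a distraction matrix and $I$ a monomial ideal in $P$. Then $D_{\mathcal{L}}(\mathrm{Sat}(I)) = \mathrm{Sat}(D_{\mathcal{L}}(I))$, where $\mathrm{Sat}(J) = \bigcup_{r} (J : M^r)$ with $M = (x_1,\dots,x_n)$ the irrelevant maximal ideal. -/

import Mathlib

open MvPolynomial

noncomputable section
/-- A distraction matrix: a family of linear forms `L i j` (`1 ≤ i ≤ n`, `j ∈ ℕ`) such that
every selection `L 1 j₁, …, L n jₙ` spans the space of linear forms, and every row is
eventually constant. -/
def IsDistractionMatrix (n : ℕ) (K : Type*) [Field K]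
    (L : Fin n → ℕ → MvPolynomial (Fin n) K) : Prop :=
  (∀ i j, (L i j).IsHomogeneous 1) ∧
  (∀ js : Fin n → ℕ, ∀ k : Fin n,
      (X k : MvPolynomial (Fin n) K) ∈
        Submodule.span K (Set.range fun i => L i (js i))) ∧
  (∃ N : ℕ, ∀ i : Fin n, ∀ j : ℕ, N < j → L i j = L i N)

/-- The distraction of the monomial `x^d`: `∏ i ∏_{j=1}^{d i} L i j`. -/
def distrMon (n : ℕ) (K : Type*) [Field K]
    (L : Fin n → ℕ → MvPolynomial (Fin n) K) (d : Fin n →₀ ℕ) :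
    MvPolynomial (Fin n) K :=
  ∏ i, ∏ j ∈ Finset.range (d i), L i (j + 1)

/-- The distraction operator `D_L`, extended `K`-linearly from monomials to all of `P`. -/
def distr (n : ℕ) (K : Type*) [Field K]
    (L : Fin n → ℕ → MvPolynomial (Fin n) K) (f : MvPolynomial (Fin n) K) :
    MvPolynomial (Fin n) K :=
  ∑ d ∈ f.support, coeff d f • distrMon n K L d
/-- The distraction of an ideal: the ideal generated by the distractions of its elements. -/
def distrIdeal (n : ℕ) (K : Type*) [Field K]
    (L : Fin n → ℕ → MvPolynomial (Fin n) K) (I : Ideal (MvPolynomial (Fin n) K)) :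
    Ideal (MvPolynomial (Fin n) K) :=
  Ideal.span (distr n K L '' I)

/-- The saturation `J : M^∞` of an ideal with respect to the irrelevant maximal ideal
`M = (x_1,…,x_n)`. -/
def satIdeal (n : ℕ) (K : Type*) [Field K] (J : Ideal (MvPolynomial (Fin n) K)) :
    Ideal (MvPolynomial (Fin n) K) :=
  ⨆ r : ℕ, Submodule.colon J
    ((Ideal.span (Set.range (X : Fin n → MvPolynomial (Fin n) K)) ^ r).restrictScalars (MvPolynomial (Fin n) K))

/-- A monomial ideal: an ideal generated by monomials. -/
def IsMonomialIdeal (n : ℕ) (K : Type*) [Field K]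
    (I : Ideal (MvPolynomial (Fin n) K)) : Prop :=
  ∃ S : Set (Fin n →₀ ℕ), I = Ideal.span ((fun d => monomial d (1 : K)) '' S)


/-! ### Auxiliary development -/

namespace DistractionProof

open Finsupp

variable {n : ℕ} {K : Type*} [Field K]

/-- Column-shift of a distraction matrix. -/
def shiftMat (e : Fin n →₀ ℕ) (L : Fin n → ℕ → MvPolynomial (Fin n) K) :
    Fin n → ℕ → MvPolynomial (Fin n) K := fun i j => L i (j + e i)

lemma shiftMat_isDM {L : Fin n → ℕ → MvPolynomial (Fin n) K}
    (hL : IsDistractionMatrix n K L) (e : Fin n →₀ ℕ) :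
    IsDistractionMatrix n K (shiftMat e L) := by
  obtain ⟨h1, h2, N, h3⟩ := hL
  refine ⟨fun i j => h1 i _, fun js k => h2 (fun i => js i + e i) k, ⟨N, fun i j hj => ?_⟩⟩
  show L i (j + e i) = L i (N + e i)
  rcases Nat.eq_zero_or_pos (e i) with h | h
  · rw [h]; exact h3 i j hj
  · rw [h3 i (j + e i) (by omega), h3 i (N + e i) (by omega)]

lemma degree_eq_sum_univ (d : Fin n →₀ ℕ) : d.degree = ∑ i, d i :=
  Finset.sum_subset (Finset.subset_univ _)
    (fun i _ hi => Finsupp.notMem_support_iff.mp hi)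

lemma distrMon_zero (L : Fin n → ℕ → MvPolynomial (Fin n) K) : distrMon n K L 0 = 1 := by
  simp [distrMon]

lemma distrMon_add (L : Fin n → ℕ → MvPolynomial (Fin n) K) (e d : Fin n →₀ ℕ) :
    distrMon n K L (e + d) = distrMon n K L e * distrMon n K (shiftMat e L) d := by
  unfold distrMon shiftMat
  rw [← Finset.prod_mul_distrib]
  refine Finset.prod_congr rfl fun i _ => ?_
  rw [Finsupp.add_apply, Finset.prod_range_add]
  refine congrArg _ (Finset.prod_congr rfl fun j _ => ?_)
  congr 1
  omega

lemma distrMon_single (L : Fin n → ℕ → MvPolynomial (Fin n) K) (i : Fin n) (m : ℕ) :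
    distrMon n K L (Finsupp.single i m) = ∏ j ∈ Finset.range m, L i (j + 1) := by
  unfold distrMon
  rw [Finset.prod_eq_single i]
  · rw [Finsupp.single_eq_same]
  · intro b _ hb
    rw [Finsupp.single_eq_of_ne' (Ne.symm hb)]
    simp
  · intro h
    exact absurd (Finset.mem_univ i) h

lemma distrMon_add_single (L : Fin n → ℕ → MvPolynomial (Fin n) K) (d : Fin n →₀ ℕ)
    (i : Fin n) :
    distrMon n K L (d + Finsupp.single i 1) = L i (d i + 1) * distrMon n K L d := by
  rw [distrMon_add, distrMon_single, Finset.prod_range_one]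
  show distrMon n K L d * L i (0 + 1 + d i) = _
  rw [mul_comm]
  congr 2
  omega

lemma distrMon_isHomogeneous {L : Fin n → ℕ → MvPolynomial (Fin n) K}
    (hL : IsDistractionMatrix n K L) (d : Fin n →₀ ℕ) :
    (distrMon n K L d).IsHomogeneous d.degree := by
  rw [degree_eq_sum_univ]
  refine MvPolynomial.IsHomogeneous.prod Finset.univ _ _ (fun i _ => ?_)
  have := MvPolynomial.IsHomogeneous.prod (Finset.range (d i))
      (fun j => L i (j + 1)) (fun _ => 1) (fun j _ => hL.1 i (j + 1))
  simpa using this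

lemma X_mul_distrMon {L : Fin n → ℕ → MvPolynomial (Fin n) K}
    (hL : IsDistractionMatrix n K L) (k : Fin n) (d : Fin n →₀ ℕ) :
    ∃ c : Fin n → K,
      X k * distrMon n K L d = ∑ i, c i • distrMon n K L (d + Finsupp.single i 1) := by
  obtain ⟨c, hc⟩ := (Submodule.mem_span_range_iff_exists_fun K).mp (hL.2.1 (fun i => d i + 1) k)
  refine ⟨c, ?_⟩
  rw [← hc, Finset.sum_mul]
  refine Finset.sum_congr rfl fun i _ => ?_
  rw [smul_mul_assoc, distrMon_add_single]

lemma mul_distrMon_mem_span {L : Fin n → ℕ → MvPolynomial (Fin n) K}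
    (hL : IsDistractionMatrix n K L) (p : MvPolynomial (Fin n) K) (g : Fin n →₀ ℕ) :
    p * distrMon n K L g ∈ Submodule.span K (distrMon n K L '' {d | g ≤ d}) := by
  induction p using MvPolynomial.induction_on generalizing g with
  | C c =>
    rw [MvPolynomial.C_mul']
    exact Submodule.smul_mem _ _ (Submodule.subset_span ⟨g, le_refl g, rfl⟩)
  | add p q hp hq =>
    rw [add_mul]; exact Submodule.add_mem _ (hp g) (hq g)
  | mul_X p k hp =>
    obtain ⟨c, hc⟩ := X_mul_distrMon hL k g
    rw [mul_assoc, hc, Finset.mul_sum]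
    refine Submodule.sum_mem _ fun i _ => ?_
    rw [mul_smul_comm]
    refine Submodule.smul_mem _ _ (Submodule.span_mono ?_ (hp (g + Finsupp.single i 1)))
    exact Set.image_mono (fun d hd => le_trans (self_le_add_right g _) hd)

lemma span_range_distrMon {L : Fin n → ℕ → MvPolynomial (Fin n) K}
    (hL : IsDistractionMatrix n K L) :
    Submodule.span K (Set.range (distrMon n K L)) = ⊤ := by
  rw [eq_top_iff]
  intro p _
  have h := mul_distrMon_mem_span hL p 0
  rw [distrMon_zero, mul_one] at h
  have huniv : {d : Fin n →₀ ℕ | 0 ≤ d} = Set.univ := Set.eq_univ_of_forall fun d => (zero_le : 0 ≤ d)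
  rwa [huniv, Set.image_univ] at h


/-- The linear-combination map sending `single d c` to `c • distrMon d`. -/
def DL (L : Fin n → ℕ → MvPolynomial (Fin n) K) :
    ((Fin n →₀ ℕ) →₀ K) →ₗ[K] MvPolynomial (Fin n) K :=
  Finsupp.linearCombination K (distrMon n K L)

/-- The distraction operator as a linear endomorphism of the polynomial ring. -/
def Dlin (L : Fin n → ℕ → MvPolynomial (Fin n) K) :
    MvPolynomial (Fin n) K →ₗ[K] MvPolynomial (Fin n) K :=
  (DL L).comp ((MvPolynomial.basisMonomials (Fin n) K).repr : _ →ₗ[K] _)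

lemma Dlin_monomial (L : Fin n → ℕ → MvPolynomial (Fin n) K) (d : Fin n →₀ ℕ) (c : K) :
    Dlin L (monomial d c) = c • distrMon n K L d := by
  have h1 : (monomial d c : MvPolynomial (Fin n) K)
      = c • (MvPolynomial.basisMonomials (Fin n) K) d := by
    rw [coe_basisMonomials]
    rw [MvPolynomial.smul_monomial, smul_eq_mul, mul_one]
  rw [h1, map_smul]
  show c • (DL L) ((MvPolynomial.basisMonomials (Fin n) K).repr
      ((MvPolynomial.basisMonomials (Fin n) K) d)) = _
  rw [Module.Basis.repr_self]
  show c • Finsupp.linearCombination K (distrMon n K L) (Finsupp.single d 1) = _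
  rw [Finsupp.linearCombination_single, one_smul]

lemma DL_eq_Dlin (L : Fin n → ℕ → MvPolynomial (Fin n) K) (h : (Fin n →₀ ℕ) →₀ K) :
    DL L h = Dlin L ((MvPolynomial.basisMonomials (Fin n) K).repr.symm h) := by
  show _ = DL L ((MvPolynomial.basisMonomials (Fin n) K).repr
    ((MvPolynomial.basisMonomials (Fin n) K).repr.symm h))
  rw [LinearEquiv.apply_symm_apply]

lemma hc_distrMon {L : Fin n → ℕ → MvPolynomial (Fin n) K}
    (hL : IsDistractionMatrix n K L) (t : ℕ) (d : Fin n →₀ ℕ) :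
    homogeneousComponent t (distrMon n K L d)
      = if t = d.degree then distrMon n K L d else 0 :=
  homogeneousComponent_of_mem ((mem_homogeneousSubmodule _ _).mpr
    (distrMon_isHomogeneous hL d))

lemma hc_Dlin {L : Fin n → ℕ → MvPolynomial (Fin n) K}
    (hL : IsDistractionMatrix n K L) (t : ℕ) (f : MvPolynomial (Fin n) K) :
    homogeneousComponent t (Dlin L f) = Dlin L (homogeneousComponent t f) := by
  induction f using MvPolynomial.induction_on' with
  | monomial d c =>
    rw [Dlin_monomial, map_smul, hc_distrMon hL]
    have h2 : homogeneousComponent t (monomial d c : MvPolynomial (Fin n) K)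
        = if t = d.degree then monomial d c else 0 :=
      homogeneousComponent_of_mem ((mem_homogeneousSubmodule _ _).mpr
        (isHomogeneous_monomial c rfl))
    rw [h2]
    split_ifs
    · rw [Dlin_monomial]
    · rw [map_zero, smul_zero]
  | add p q hp hq => simp only [map_add, hp, hq]

lemma finite_degree_eq (t : ℕ) : {d : Fin n →₀ ℕ | d.degree = t}.Finite :=
  (Finsupp.finite_of_degree_le t).subset (fun _ hd => le_of_eq hd)

lemma fd_Vt (t : ℕ) : FiniteDimensional K (homogeneousSubmodule (Fin n) K t) := by
  haveI : FiniteDimensional K (Submodule.span K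
      ((fun d => (monomial d (1 : K) : MvPolynomial (Fin n) K)) '' {d | d.degree = t})) :=
    FiniteDimensional.span_of_finite K ((finite_degree_eq t).image _)
  refine Submodule.finiteDimensional_of_le (S₂ := Submodule.span K
      ((fun d => (monomial d (1 : K) : MvPolynomial (Fin n) K)) '' {d | d.degree = t})) ?_
  intro p hp
  rw [mem_homogeneousSubmodule] at hp
  rw [p.as_sum]
  refine Submodule.sum_mem _ fun d hd => ?_
  have h1 : (monomial d (coeff d p) : MvPolynomial (Fin n) K)
      = (coeff d p) • monomial d 1 := by rw [MvPolynomial.smul_monomial, smul_eq_mul, mul_one]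
  rw [h1]
  refine Submodule.smul_mem _ _ (Submodule.subset_span ⟨d, ?_, rfl⟩)
  show d.degree = t
  rw [Finsupp.degree_eq_weight_one]
  exact hp (MvPolynomial.mem_support_iff.mp hd)

lemma Dlin_mem_Vt {L : Fin n → ℕ → MvPolynomial (Fin n) K}
    (hL : IsDistractionMatrix n K L) (t : ℕ) {f : MvPolynomial (Fin n) K}
    (hf : f ∈ homogeneousSubmodule (Fin n) K t) :
    Dlin L f ∈ homogeneousSubmodule (Fin n) K t := by
  have h0 : homogeneousComponent t f = f := by
    rw [homogeneousComponent_of_mem hf, if_pos rfl]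
  rw [← h0, ← hc_Dlin hL]
  exact (mem_homogeneousSubmodule _ _).mpr (homogeneousComponent_isHomogeneous _ _)

lemma Dlin_surjective {L : Fin n → ℕ → MvPolynomial (Fin n) K}
    (hL : IsDistractionMatrix n K L) : Function.Surjective (Dlin L) := by
  intro p
  have hr : LinearMap.range (DL L) = ⊤ := by
    rw [DL, Finsupp.range_linearCombination, span_range_distrMon hL]
  obtain ⟨h, hh⟩ := LinearMap.range_eq_top.mp hr p
  exact ⟨(MvPolynomial.basisMonomials (Fin n) K).repr.symm h, by rw [← DL_eq_Dlin, hh]⟩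

lemma Dlin_injective {L : Fin n → ℕ → MvPolynomial (Fin n) K}
    (hL : IsDistractionMatrix n K L) : Function.Injective (Dlin L) := by
  have hVt : ∀ (t : ℕ) (f : MvPolynomial (Fin n) K),
      f ∈ homogeneousSubmodule (Fin n) K t → Dlin L f = 0 → f = 0 := by
    intro t f hf h0
    haveI : FiniteDimensional K (homogeneousSubmodule (Fin n) K t) := fd_Vt t
    set DT : homogeneousSubmodule (Fin n) K t →ₗ[K] homogeneousSubmodule (Fin n) K t :=
      (Dlin L).restrict (fun x hx => Dlin_mem_Vt hL t hx) with hDT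
    have hsurj : Function.Surjective DT := by
      rintro ⟨p, hp⟩
      obtain ⟨f', hf'⟩ := Dlin_surjective hL p
      refine ⟨⟨homogeneousComponent t f',
        (mem_homogeneousSubmodule _ _).mpr (homogeneousComponent_isHomogeneous _ _)⟩, ?_⟩
      apply Subtype.ext
      show Dlin L (homogeneousComponent t f') = p
      rw [← hc_Dlin hL, hf', homogeneousComponent_of_mem hp, if_pos rfl]
    have hinj : Function.Injective DT := LinearMap.injective_iff_surjective.mpr hsurj
    have hz : DT ⟨f, hf⟩ = 0 := Subtype.ext h0
    have := hinj (hz.trans (map_zero DT).symm)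
    exact congrArg Subtype.val this
  have hker : ∀ f, Dlin L f = 0 → f = 0 := by
    intro f hf
    have hcomp : ∀ t : ℕ, homogeneousComponent t f = 0 := by
      intro t
      refine hVt t _ ((mem_homogeneousSubmodule _ _).mpr
        (homogeneousComponent_isHomogeneous _ _)) ?_
      rw [← hc_Dlin hL, hf, map_zero]
    rw [← MvPolynomial.sum_homogeneousComponent f]
    exact Finset.sum_eq_zero fun t _ => hcomp t
  intro a b hab
  have : Dlin L (a - b) = 0 := by rw [map_sub, hab, sub_self]
  have := hker _ this
  exact sub_eq_zero.mp this

lemma DL_injective {L : Fin n → ℕ → MvPolynomial (Fin n) K}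
    (hL : IsDistractionMatrix n K L) : Function.Injective (DL L) := by
  intro a b hab
  rw [DL_eq_Dlin, DL_eq_Dlin] at hab
  exact (MvPolynomial.basisMonomials (Fin n) K).repr.symm.injective (Dlin_injective hL hab)

lemma DL_surjective {L : Fin n → ℕ → MvPolynomial (Fin n) K}
    (hL : IsDistractionMatrix n K L) : Function.Surjective (DL L) := by
  intro p
  obtain ⟨f, hf⟩ := Dlin_surjective hL p
  exact ⟨(MvPolynomial.basisMonomials (Fin n) K).repr f, by
    rw [DL_eq_Dlin, LinearEquiv.symm_apply_apply, hf]⟩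

/-- Membership criterion in the span of distractions of a set of exponents. -/
lemma DL_mem_span_iff {L : Fin n → ℕ → MvPolynomial (Fin n) K}
    (hL : IsDistractionMatrix n K L) (T : Set (Fin n →₀ ℕ)) (h : (Fin n →₀ ℕ) →₀ K) :
    DL L h ∈ Submodule.span K (distrMon n K L '' T) ↔ ↑h.support ⊆ T := by
  constructor
  · intro hm
    rw [show Submodule.span K (distrMon n K L '' T)
        = Submodule.map (DL L) (Finsupp.supported K K T) from
      Finsupp.span_image_eq_map_linearCombination K T] at hm
    obtain ⟨h', hh', heq⟩ := hm
    rw [← DL_injective hL heq]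
    exact (Finsupp.mem_supported K h').mp hh'
  · intro hs
    show Finsupp.linearCombination K (distrMon n K L) h ∈ _
    rw [Finsupp.linearCombination_apply, Finsupp.sum]
    exact Submodule.sum_mem _ fun d hd =>
      Submodule.smul_mem _ _ (Submodule.subset_span ⟨d, hs hd, rfl⟩)


/-! ### Degree combinatorics -/

lemma degree_add' (a b : Fin n →₀ ℕ) : (a + b).degree = a.degree + b.degree := by
  simp [Finsupp.degree_eq_weight_one, map_add]

lemma degree_single' (i : Fin n) (m : ℕ) : (Finsupp.single i m).degree = m := by
  rw [degree_eq_sum_univ, Finset.sum_eq_single i]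
  · rw [Finsupp.single_eq_same]
  · intro b _ hb; rw [Finsupp.single_eq_of_ne' (Ne.symm hb)]
  · intro h; exact absurd (Finset.mem_univ i) h

lemma exists_single_add {e : Fin n →₀ ℕ} {m : ℕ} (he : e.degree = m + 1) :
    ∃ (k : Fin n) (e'' : Fin n →₀ ℕ), e''.degree = m ∧ Finsupp.single k 1 + e'' = e := by
  have hne : e ≠ 0 := by
    intro h; rw [h, map_zero] at he; exact Nat.succ_ne_zero m he.symm
  obtain ⟨k, hk⟩ : ∃ k, e k ≠ 0 := by
    by_contra h; push_neg at h; exact hne (Finsupp.ext h)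
  have hle : Finsupp.single k 1 ≤ e := by
    rw [Finsupp.single_le_iff]; omega
  refine ⟨k, e - Finsupp.single k 1, ?_, add_tsub_cancel_of_le hle⟩
  have h1 : (Finsupp.single k 1 + (e - Finsupp.single k 1)).degree = e.degree := by
    rw [add_tsub_cancel_of_le hle]
  rw [degree_add', degree_single'] at h1
  omega

/-! ### Ideals of monomials and distractions -/

/-- The monomial ideal attached to a set of exponents. -/
def mI (n : ℕ) (K : Type*) [Field K] (T : Set (Fin n →₀ ℕ)) :
    Ideal (MvPolynomial (Fin n) K) :=
  Ideal.span ((fun d => monomial d (1 : K)) '' T)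

/-- The `K`-span of distractions of a set of exponents. -/
def DSp (L : Fin n → ℕ → MvPolynomial (Fin n) K) (T : Set (Fin n →₀ ℕ)) :
    Submodule K (MvPolynomial (Fin n) K) :=
  Submodule.span K (distrMon n K L '' T)

/-- The ideal generated by distractions of a set of exponents. -/
def DIdl (L : Fin n → ℕ → MvPolynomial (Fin n) K) (T : Set (Fin n →₀ ℕ)) :
    Ideal (MvPolynomial (Fin n) K) :=
  Ideal.span (distrMon n K L '' T)

/-- The irrelevant maximal ideal. -/
def irrIdeal (n : ℕ) (K : Type*) [Field K] : Ideal (MvPolynomial (Fin n) K) :=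
  Ideal.span (Set.range (X : Fin n → MvPolynomial (Fin n) K))

def UpClosed (T : Set (Fin n →₀ ℕ)) : Prop := ∀ d ∈ T, ∀ e, d + e ∈ T

lemma support_subset_of_mem_mI (T : Set (Fin n →₀ ℕ)) (f : MvPolynomial (Fin n) K)
    (hf : f ∈ mI n K T) : ∀ d ∈ f.support, ∃ g ∈ T, g ≤ d := by
  classical
  refine Submodule.span_induction ?_ ?_ ?_ ?_ hf
  · rintro _ ⟨g, hg, rfl⟩ d hd
    rw [MvPolynomial.support_monomial] at hd
    simp only [one_ne_zero, if_false, Finset.mem_singleton] at hd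
    exact ⟨g, hg, le_of_eq hd.symm⟩
  · intro d hd; simp at hd
  · intro x y _ _ ihx ihy d hd
    rcases Finset.mem_union.mp (MvPolynomial.support_add hd) with h | h
    · exact ihx d h
    · exact ihy d h
  · intro a x _ ih d hd
    rw [smul_eq_mul] at hd
    have := MvPolynomial.support_mul a x hd
    obtain ⟨d1, hd1, d2, hd2, rfl⟩ := Finset.mem_add.mp this
    obtain ⟨g, hg, hle⟩ := ih d2 hd2
    exact ⟨g, hg, le_trans hle (le_add_self)⟩

lemma distr_monomial (L : Fin n → ℕ → MvPolynomial (Fin n) K) (d : Fin n →₀ ℕ) :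
    distr n K L (monomial d (1 : K)) = distrMon n K L d := by
  classical
  rw [distr]
  rw [MvPolynomial.support_monomial]
  simp [MvPolynomial.coeff_monomial]

lemma distrIdeal_mI {L : Fin n → ℕ → MvPolynomial (Fin n) K}
    (hL : IsDistractionMatrix n K L) (T : Set (Fin n →₀ ℕ)) :
    distrIdeal n K L (mI n K T) = DIdl L T := by
  apply le_antisymm
  · rw [distrIdeal]
    apply Ideal.span_le.mpr
    rintro _ ⟨f, hf, rfl⟩
    rw [distr]
    refine Submodule.sum_mem _ fun d hd => ?_
    rw [MvPolynomial.smul_eq_C_mul]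
    refine Ideal.mul_mem_left _ _ ?_
    obtain ⟨g, hg, hle⟩ := support_subset_of_mem_mI T f hf d hd
    obtain ⟨e, rfl⟩ := le_iff_exists_add.mp hle
    rw [distrMon_add]
    exact Ideal.mul_mem_right _ _ (Ideal.subset_span ⟨g, hg, rfl⟩)
  · apply Ideal.span_le.mpr
    rintro _ ⟨d, hd, rfl⟩
    rw [← distr_monomial L d]
    exact Ideal.subset_span ⟨monomial d 1, Ideal.subset_span ⟨d, hd, rfl⟩, rfl⟩

lemma mul_mem_DSp {L : Fin n → ℕ → MvPolynomial (Fin n) K}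
    (hL : IsDistractionMatrix n K L) {T : Set (Fin n →₀ ℕ)} (hT : UpClosed T)
    (p : MvPolynomial (Fin n) K) {f : MvPolynomial (Fin n) K} (hf : f ∈ DSp L T) :
    p * f ∈ DSp L T := by
  refine Submodule.span_induction ?_ ?_ ?_ ?_ hf
  · rintro _ ⟨g, hg, rfl⟩
    refine Submodule.span_mono ?_ (mul_distrMon_mem_span hL p g)
    refine Set.image_mono fun (d : Fin n →₀ ℕ) hd => ?_
    replace hd : g ≤ d := hd
    obtain ⟨e, rfl⟩ := le_iff_exists_add.mp hd
    exact hT g hg e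
  · rw [mul_zero]; exact Submodule.zero_mem _
  · intro x y _ _ ihx ihy; rw [mul_add]; exact Submodule.add_mem _ ihx ihy
  · intro c x _ ih; rw [mul_smul_comm]; exact Submodule.smul_mem _ _ ih

lemma coe_DIdl_eq_DSp {L : Fin n → ℕ → MvPolynomial (Fin n) K}
    (hL : IsDistractionMatrix n K L) {T : Set (Fin n →₀ ℕ)} (hT : UpClosed T) :
    (DIdl L T : Set (MvPolynomial (Fin n) K)) = (DSp L T : Set (MvPolynomial (Fin n) K)) := by
  apply Set.Subset.antisymm
  · intro x hx
    refine Submodule.span_induction ?_ ?_ ?_ ?_ hx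
    · exact fun y hy => Submodule.subset_span hy
    · exact Submodule.zero_mem _
    · exact fun a b _ _ iha ihb => Submodule.add_mem _ iha ihb
    · intro a y _ ih
      rw [smul_eq_mul]
      exact mul_mem_DSp hL hT a ih
  · intro x hx
    have hle : DSp L T ≤ (DIdl L T).restrictScalars K :=
      Submodule.span_le.mpr fun y hy => Ideal.subset_span hy
    exact hle hx

lemma irr_pow_eq_span (r : ℕ) :
    (irrIdeal n K) ^ r
      = Ideal.span ((fun e => monomial e (1 : K)) '' {e : Fin n →₀ ℕ | e.degree = r}) := by
  induction r with
  | zero =>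
    rw [pow_zero, Ideal.one_eq_top]
    symm
    rw [eq_top_iff, ← Ideal.span_singleton_one]
    apply Ideal.span_le.mpr
    intro x hx
    rw [Set.mem_singleton_iff.mp hx]
    refine Ideal.subset_span ⟨0, by simp [map_zero], ?_⟩
    simp
  | succ r ih =>
    rw [pow_succ, ih]
    apply le_antisymm
    · rw [irrIdeal, Ideal.span_mul_span]
      apply Ideal.span_le.mpr
      intro x hx
      simp only [Set.mem_mul] at hx
      obtain ⟨a, ha, b, hb, rfl⟩ := hx
      obtain ⟨e, he, rfl⟩ := ha
      obtain ⟨k, rfl⟩ := hb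
      refine Ideal.subset_span ⟨e + Finsupp.single k 1, ?_, ?_⟩
      · have h2 : e.degree = r := he
        have h3 : (e + Finsupp.single k 1).degree = r + 1 := by
          rw [degree_add', degree_single', h2]
        exact h3
      · show monomial (e + Finsupp.single k 1) (1 : K) = monomial e 1 * X k
        rw [MvPolynomial.monomial_add_single, pow_one]
    · apply Ideal.span_le.mpr
      rintro _ ⟨e, he, rfl⟩
      obtain ⟨k, e'', hdeg, hsum⟩ := exists_single_add he
      show (monomial e (1 : K) : MvPolynomial (Fin n) K) ∈ _
      have hmon : (monomial e (1 : K) : MvPolynomial (Fin n) K)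
          = monomial e'' 1 * X k := by
        rw [← hsum, add_comm, MvPolynomial.monomial_add_single, pow_one]
      rw [hmon]
      exact Ideal.mul_mem_mul (Ideal.subset_span ⟨e'', hdeg, rfl⟩)
        (Ideal.subset_span ⟨k, rfl⟩)

lemma distrMon_mul_monomial_mem {L : Fin n → ℕ → MvPolynomial (Fin n) K}
    (hL : IsDistractionMatrix n K L) {T : Set (Fin n →₀ ℕ)} (hT : UpClosed T) :
    ∀ (m : ℕ) (d : Fin n →₀ ℕ), (∀ e : Fin n →₀ ℕ, e.degree = m → d + e ∈ T) →
    ∀ e' : Fin n →₀ ℕ, e'.degree = m →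
      distrMon n K L d * monomial e' 1 ∈ DIdl L T := by
  intro m
  induction m with
  | zero =>
    intro d hd e' he'
    have h0 : e' = 0 := by rwa [Finsupp.degree_eq_zero_iff] at he'
    subst h0
    have h1 : (monomial (0 : Fin n →₀ ℕ) (1 : K) : MvPolynomial (Fin n) K) = 1 := by
      simp
    rw [h1, mul_one]
    exact Ideal.subset_span ⟨d, by simpa using hd 0 (by simp), rfl⟩
  | succ m ih =>
    intro d hd e' he'
    obtain ⟨k, e'', hdeg, hsum⟩ := exists_single_add he'
    have hmon : (monomial e' (1 : K) : MvPolynomial (Fin n) K)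
        = X k * monomial e'' 1 := by
      rw [← hsum, MvPolynomial.monomial_single_add, pow_one]
    rw [hmon, ← mul_assoc, mul_comm (distrMon n K L d) (X k)]
    obtain ⟨c, hc⟩ := X_mul_distrMon hL k d
    rw [hc, Finset.sum_mul]
    refine Submodule.sum_mem _ fun i _ => ?_
    rw [smul_mul_assoc]
    refine Submodule.smul_of_tower_mem _ _ ?_
    refine ih (d + Finsupp.single i 1) (fun e he => ?_) e'' hdeg
    have := hd (Finsupp.single i 1 + e)
      (by rw [degree_add', degree_single', he, Nat.add_comm])
    rwa [← add_assoc] at this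


/-! ### Saturation combinatorics -/

/-- The saturation of a set of exponents. -/
def satSet (T : Set (Fin n →₀ ℕ)) : Set (Fin n →₀ ℕ) :=
  {d | ∃ m : ℕ, ∀ e : Fin n →₀ ℕ, e.degree = m → d + e ∈ T}

lemma subset_satSet (T : Set (Fin n →₀ ℕ)) : T ⊆ satSet T := by
  intro d hd
  refine ⟨0, fun e he => ?_⟩
  rw [Finsupp.degree_eq_zero_iff] at he
  rwa [he, add_zero]

lemma upClosed_satSet {T : Set (Fin n →₀ ℕ)} (hT : UpClosed T) : UpClosed (satSet T) := by
  rintro d ⟨m, hm⟩ h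
  refine ⟨m, fun e he => ?_⟩
  have h1 := hT _ (hm e he) h
  have h2 : d + e + h = d + h + e := by
    rw [add_right_comm]
  rwa [h2] at h1

lemma exists_le_of_degree_le (e : Fin n →₀ ℕ) (m : ℕ) (h : m ≤ e.degree) :
    ∃ h' : Fin n →₀ ℕ, h' ≤ e ∧ h'.degree = m := by
  induction m with
  | zero => exact ⟨0, (zero_le : 0 ≤ e), map_zero _⟩
  | succ m ih =>
    obtain ⟨h', hle, hdeg⟩ := ih (le_trans (Nat.le_succ m) h)
    have hlt : ∃ k, h' k < e k := by
      by_contra hc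
      push_neg at hc
      have heq : h' = e := le_antisymm hle (Finsupp.le_def.mpr hc)
      rw [heq] at hdeg
      omega
    obtain ⟨k, hk⟩ := hlt
    refine ⟨h' + Finsupp.single k 1, ?_, by rw [degree_add', degree_single', hdeg]⟩
    rw [Finsupp.le_def]
    intro a
    rcases eq_or_ne a k with rfl | hak
    · rw [Finsupp.add_apply, Finsupp.single_eq_same]; omega
    · rw [Finsupp.add_apply, Finsupp.single_eq_of_ne' (Ne.symm hak), add_zero]
      exact Finsupp.le_def.mp hle a

lemma witness_mono {T : Set (Fin n →₀ ℕ)} (hT : UpClosed T) {d : Fin n →₀ ℕ} {m : ℕ}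
    (hm : ∀ e : Fin n →₀ ℕ, e.degree = m → d + e ∈ T) :
    ∀ e : Fin n →₀ ℕ, m ≤ e.degree → d + e ∈ T := by
  intro e he
  obtain ⟨h', hle, hdeg⟩ := exists_le_of_degree_le e m he
  obtain ⟨c, rfl⟩ := le_iff_exists_add.mp hle
  have h1 := hT _ (hm h' hdeg) c
  rwa [add_assoc] at h1

lemma mem_satIdeal_iff (J : Ideal (MvPolynomial (Fin n) K)) (f : MvPolynomial (Fin n) K) :
    f ∈ satIdeal n K J ↔ ∃ r : ℕ, ∀ p ∈ (irrIdeal n K) ^ r, f * p ∈ J := by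
  have hdir : Directed (· ≤ ·) (fun r : ℕ => Submodule.colon J
      (((irrIdeal n K) ^ r).restrictScalars (MvPolynomial (Fin n) K))) := by
    have hmono : Monotone (fun r : ℕ => Submodule.colon J
        (((irrIdeal n K) ^ r).restrictScalars (MvPolynomial (Fin n) K))) := by
      intro a b hab
      refine Submodule.colon_mono (le_refl J) ?_
      intro x hx
      rw [SetLike.mem_coe, Submodule.restrictScalars_mem] at hx ⊢
      exact Ideal.pow_le_pow_right hab hx
    exact hmono.directed_le
  show f ∈ ⨆ r : ℕ, Submodule.colon J (((irrIdeal n K) ^ r).restrictScalars (MvPolynomial (Fin n) K)) ↔ _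
  rw [Submodule.mem_iSup_of_directed _ hdir]
  apply exists_congr
  intro r
  rw [Submodule.mem_colon]
  constructor
  · intro h p hp
    have := h p ((Submodule.restrictScalars_mem _ _ _).mpr hp)
    rwa [smul_eq_mul] at this
  · intro h p hp
    rw [smul_eq_mul]
    exact h p ((Submodule.restrictScalars_mem _ _ _).mp hp)

lemma mul_monomial_mem_of_satIdeal {J : Ideal (MvPolynomial (Fin n) K)}
    {f : MvPolynomial (Fin n) K} {r : ℕ}
    (h : ∀ p ∈ (irrIdeal n K) ^ r, f * p ∈ J) :
    ∀ e : Fin n →₀ ℕ, e.degree = r → f * monomial e 1 ∈ J := by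
  intro e he
  refine h _ ?_
  rw [irr_pow_eq_span]
  exact Ideal.subset_span ⟨e, he, rfl⟩

lemma satIdeal_of_colon_gens {J : Ideal (MvPolynomial (Fin n) K)}
    {f : MvPolynomial (Fin n) K} {r : ℕ}
    (h : ∀ e : Fin n →₀ ℕ, e.degree = r → f * monomial e 1 ∈ J) :
    ∀ p ∈ (irrIdeal n K) ^ r, f * p ∈ J := by
  intro p hp
  rw [irr_pow_eq_span] at hp
  refine Submodule.span_induction ?_ ?_ ?_ ?_ hp
  · rintro _ ⟨e, he, rfl⟩
    exact h e he
  · rw [mul_zero]; exact Submodule.zero_mem _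
  · intro x y _ _ ihx ihy; rw [mul_add]; exact Submodule.add_mem _ ihx ihy
  · intro a x _ ih
    rw [smul_eq_mul, ← mul_assoc, mul_comm f a, mul_assoc]
    exact Ideal.mul_mem_left _ _ ih

/-- `satIdeal` of a monomial ideal is the monomial ideal of the saturated set. -/
lemma satIdeal_mI {T : Set (Fin n →₀ ℕ)} (hT : UpClosed T) :
    satIdeal n K (mI n K T) = mI n K (satSet T) := by
  apply le_antisymm
  · intro f hf
    obtain ⟨r, hr⟩ := (mem_satIdeal_iff _ f).mp hf
    have hsupp : ∀ d ∈ f.support, d ∈ satSet T := by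
      intro d hd
      refine ⟨r, fun e he => ?_⟩
      have h1 : f * monomial e 1 ∈ mI n K T := mul_monomial_mem_of_satIdeal hr e he
      have h2 : d + e ∈ (f * monomial e 1).support := by
        rw [MvPolynomial.mem_support_iff, MvPolynomial.coeff_mul_monomial, mul_one]
        exact MvPolynomial.mem_support_iff.mp hd
      obtain ⟨g, hg, hle⟩ := support_subset_of_mem_mI _ _ h1 _ h2
      obtain ⟨c, hc⟩ := le_iff_exists_add.mp hle
      rw [hc]
      exact hT g hg c
    rw [f.as_sum]
    refine Submodule.sum_mem _ fun d hd => ?_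
    have h1 : (monomial d (coeff d f) : MvPolynomial (Fin n) K)
        = (coeff d f) • monomial d 1 := by
      rw [MvPolynomial.smul_monomial, smul_eq_mul, mul_one]
    rw [h1]
    exact Submodule.smul_of_tower_mem _ _ (Ideal.subset_span ⟨d, hsupp d hd, rfl⟩)
  · rw [mI]
    apply Ideal.span_le.mpr
    rintro _ ⟨d, ⟨m, hm⟩, rfl⟩
    rw [SetLike.mem_coe, mem_satIdeal_iff]
    refine ⟨m, satIdeal_of_colon_gens fun e he => ?_⟩
    rw [MvPolynomial.monomial_mul, one_mul]
    exact Ideal.subset_span ⟨d + e, hm e he, rfl⟩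


/-! ### Linear forms and powers of the irrelevant ideal -/

lemma isHomogeneous_one_mem_irr {p : MvPolynomial (Fin n) K} (hp : p.IsHomogeneous 1) :
    p ∈ irrIdeal n K := by
  classical
  rw [p.as_sum]
  refine Submodule.sum_mem _ fun d hd => ?_
  have hdeg : d.degree = 1 := by
    rw [Finsupp.degree_eq_weight_one]
    exact hp (MvPolynomial.mem_support_iff.mp hd)
  obtain ⟨k, e'', hdeg'', hsum⟩ := exists_single_add (m := 0) hdeg
  have he0 : e'' = 0 := by rwa [Finsupp.degree_eq_zero_iff] at hdeg''
  rw [he0, add_zero] at hsum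
  have hX : (X k : MvPolynomial (Fin n) K) = monomial (Finsupp.single k 1) 1 := rfl
  have hmon : (monomial d (coeff d p) : MvPolynomial (Fin n) K) = (coeff d p) • X k := by
    rw [hX, MvPolynomial.smul_monomial, smul_eq_mul, mul_one, hsum]
  rw [hmon]
  exact Submodule.smul_of_tower_mem _ _ (Ideal.subset_span ⟨k, rfl⟩)

lemma distrMon_single_mem_pow {L : Fin n → ℕ → MvPolynomial (Fin n) K}
    (hL : IsDistractionMatrix n K L) (i : Fin n) (m : ℕ) :
    distrMon n K L (Finsupp.single i m) ∈ (irrIdeal n K) ^ m := by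
  rw [distrMon_single]
  induction m with
  | zero => rw [pow_zero, Ideal.one_eq_top]; exact Submodule.mem_top
  | succ m ih =>
    rw [Finset.prod_range_succ, pow_succ]
    exact Ideal.mul_mem_mul ih (isHomogeneous_one_mem_irr (hL.1 i (m + 1)))

/-! ### The key colon-shift lemma -/

lemma mem_DSp_shift {L : Fin n → ℕ → MvPolynomial (Fin n) K}
    (hL : IsDistractionMatrix n K L) {T : Set (Fin n →₀ ℕ)} (e : Fin n →₀ ℕ)
    {f : MvPolynomial (Fin n) K} (hf : f * distrMon n K L e ∈ DSp L T) :
    f ∈ DSp (shiftMat e L) {d : Fin n →₀ ℕ | e + d ∈ T} := by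
  classical
  obtain ⟨g, hg⟩ := DL_surjective (shiftMat_isDM hL e) f
  have hinj : Function.Injective (fun d : Fin n →₀ ℕ => e + d) :=
    fun a b h => by simpa using h
  have key : f * distrMon n K L e = DL L (Finsupp.mapDomain (fun d => e + d) g) := by
    rw [← hg]
    show DL (shiftMat e L) g * distrMon n K L e = _
    rw [DL, DL, Finsupp.linearCombination_mapDomain,
      Finsupp.linearCombination_apply, Finsupp.linearCombination_apply,
      Finsupp.sum, Finsupp.sum, Finset.sum_mul]
    refine Finset.sum_congr rfl fun d _ => ?_
    rw [smul_mul_assoc]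
    congr 1
    show distrMon n K (shiftMat e L) d * distrMon n K L e = distrMon n K L (e + d)
    rw [distrMon_add, mul_comm]
  rw [key] at hf
  have hsupp := (DL_mem_span_iff hL T _).mp hf
  have hsub : ↑g.support ⊆ {d : Fin n →₀ ℕ | e + d ∈ T} := by
    intro d hd
    have hmem : e + d ∈ (Finsupp.mapDomain (fun d => e + d) g).support := by
      rw [Finsupp.mapDomain_support_of_injective hinj]
      exact Finset.mem_image.mpr ⟨d, hd, rfl⟩
    exact hsupp hmem
  rw [← hg]
  exact (DL_mem_span_iff (shiftMat_isDM hL e) _ g).mpr hsub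

/-! ### Row irrelevance -/

lemma DSp_row_irrel_le {L L' : Fin n → ℕ → MvPolynomial (Fin n) K}
    (hL' : IsDistractionMatrix n K L') (i : Fin n)
    (hrow : ∀ i', i' ≠ i → L i' = L' i') {T : Set (Fin n →₀ ℕ)} (hT : UpClosed T)
    (hTi : ∀ d ∈ T, d.erase i ∈ T) :
    DSp L T ≤ DSp L' T := by
  apply Submodule.span_le.mpr
  rintro _ ⟨d, hd, rfl⟩
  have hsplit : Finsupp.single i (d i) + d.erase i = d := Finsupp.single_add_erase i d
  rw [← hsplit, distrMon_add]
  have hagree : distrMon n K (shiftMat (Finsupp.single i (d i)) L) (d.erase i)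
      = distrMon n K L' (d.erase i) := by
    unfold distrMon
    refine Finset.prod_congr rfl fun i' _ => ?_
    rcases eq_or_ne i' i with rfl | hne
    · rw [Finsupp.erase_same]
      simp
    · rw [Finsupp.erase_ne hne]
      refine Finset.prod_congr rfl fun j _ => ?_
      show L i' (j + 1 + Finsupp.single i (d i) i') = L' i' (j + 1)
      rw [Finsupp.single_eq_of_ne' (Ne.symm hne), add_zero, hrow i' hne]
  rw [hagree]
  refine Submodule.span_mono ?_
    (mul_distrMon_mem_span hL' (distrMon n K L (Finsupp.single i (d i))) (d.erase i))
  refine Set.image_mono fun (x : Fin n →₀ ℕ) hx => ?_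
  replace hx : d.erase i ≤ x := hx
  obtain ⟨c, rfl⟩ := le_iff_exists_add.mp hx
  exact hT _ (hTi d hd) c

lemma DSp_row_irrel {L L' : Fin n → ℕ → MvPolynomial (Fin n) K}
    (hL : IsDistractionMatrix n K L) (hL' : IsDistractionMatrix n K L') (i : Fin n)
    (hrow : ∀ i', i' ≠ i → L i' = L' i') {T : Set (Fin n →₀ ℕ)} (hT : UpClosed T)
    (hTi : ∀ d ∈ T, d.erase i ∈ T) :
    DSp L T = DSp L' T :=
  le_antisymm (DSp_row_irrel_le hL' i hrow hT hTi)
    (DSp_row_irrel_le hL i (fun i' h => (hrow i' h).symm) hT hTi)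

/-! ### Pigeonhole for the saturated set -/

lemma mem_satSet_of_forall_single {T : Set (Fin n →₀ ℕ)} (hT : UpClosed T) (hn : 0 < n)
    {d : Fin n →₀ ℕ}
    (h : ∀ i : Fin n, ∃ m : ℕ, d + Finsupp.single i m ∈ satSet T) : d ∈ satSet T := by
  have h' : ∀ i : Fin n, ∃ m : ℕ, ∃ w : ℕ, ∀ e : Fin n →₀ ℕ,
      e.degree = w → d + Finsupp.single i m + e ∈ T := by
    intro i; obtain ⟨m, w, hw⟩ := h i; exact ⟨m, w, hw⟩
  choose m w hw using h'
  set B := (Finset.univ.sup fun i : Fin n => m i + w i) + 1 with hB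
  refine ⟨n * B, fun e he => ?_⟩
  have hex : ∃ i, B ≤ e i := by
    by_contra hc
    push_neg at hc
    have hsum : e.degree ≤ n * (B - 1) := by
      rw [degree_eq_sum_univ]
      calc ∑ i, e i ≤ ∑ _i : Fin n, (B - 1) :=
            Finset.sum_le_sum (fun i _ => by have := hc i; omega)
        _ = n * (B - 1) := by rw [Finset.sum_const, Finset.card_univ, Fintype.card_fin,
            smul_eq_mul]
    rw [he] at hsum
    have hlt : n * (B - 1) < n * B :=
      Nat.mul_lt_mul_of_pos_left (show B - 1 < B by omega) hn
    omega
  obtain ⟨i, hi⟩ := hex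
  have hmB : m i + w i < B := by
    have h4 : m i + w i ≤ Finset.univ.sup fun i : Fin n => m i + w i := by
      simpa using Finset.le_sup (f := fun i : Fin n => m i + w i) (Finset.mem_univ i)
    omega
  have hle : Finsupp.single i (m i) ≤ e := by
    rw [Finsupp.single_le_iff]; omega
  obtain ⟨c, hc⟩ := le_iff_exists_add.mp hle
  have hdc : w i ≤ c.degree := by
    have h1 : e.degree = m i + c.degree := by rw [hc, degree_add', degree_single']
    have h2 : B ≤ n * B := Nat.le_mul_of_pos_left B hn
    omega
  have h3 := witness_mono hT (hw i) c hdc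
  rw [add_assoc, ← hc] at h3
  exact h3

end DistractionProof

/-- distraction commutes with saturation: `D_L(Sat I) = Sat(D_L(I))`. -/
theorem distr_satIdeal (n : ℕ) (K : Type*) [Field K] [Infinite K]
    (L : Fin n → ℕ → MvPolynomial (Fin n) K) (hL : IsDistractionMatrix n K L)
    (I : Ideal (MvPolynomial (Fin n) K)) (hI : IsMonomialIdeal n K I) :
    distrIdeal n K L (satIdeal n K I) = satIdeal n K (distrIdeal n K L I) := by
  classical
  open DistractionProof in
  rcases Nat.eq_zero_or_pos n with hn | hn
  · subst hn
    have hsat : ∀ J : Ideal (MvPolynomial (Fin 0) K), satIdeal 0 K J = ⊤ := by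
      intro J
      rw [eq_top_iff]
      intro f _
      rw [mem_satIdeal_iff]
      refine ⟨1, fun p hp => ?_⟩
      have hbot : irrIdeal 0 K = ⊥ := by
        rw [irrIdeal, Set.range_eq_empty, Ideal.span_empty]
      rw [pow_one, hbot] at hp
      rw [Ideal.mem_bot.mp hp, mul_zero]
      exact J.zero_mem
    have hone : (1 : MvPolynomial (Fin 0) K) ∈ distrIdeal 0 K L ⊤ := by
      have h1 : distr 0 K L (monomial 0 (1 : K)) = 1 := by
        rw [distr_monomial, distrMon_zero]
      exact Ideal.subset_span ⟨monomial 0 1, Submodule.mem_top, h1⟩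
    rw [hsat I, hsat (distrIdeal 0 K L I)]
    exact (Ideal.eq_top_iff_one _).mpr hone
  · set T : Set (Fin n →₀ ℕ) := {d | monomial d (1 : K) ∈ I} with hTdef
    have hIT : I = mI n K T := by
      obtain ⟨S, hS⟩ := hI
      apply le_antisymm
      · rw [hS]
        apply Ideal.span_le.mpr
        rintro _ ⟨s, hs, rfl⟩
        refine Ideal.subset_span ⟨s, ?_, rfl⟩
        show monomial s (1 : K) ∈ I
        rw [hS]
        exact Ideal.subset_span ⟨s, hs, rfl⟩
      · apply Ideal.span_le.mpr
        rintro _ ⟨d, hd, rfl⟩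
        exact hd
    have hT : UpClosed T := by
      intro d hd e
      show monomial (d + e) (1 : K) ∈ I
      have hmm : (monomial (d + e) (1 : K) : MvPolynomial (Fin n) K)
          = monomial d 1 * monomial e 1 := by
        rw [MvPolynomial.monomial_mul, one_mul]
      rw [hmm]
      exact Ideal.mul_mem_right _ _ hd
    have hT' : UpClosed (satSet T) := upClosed_satSet hT
    have hLHS : distrIdeal n K L (satIdeal n K I) = DIdl L (satSet T) := by
      rw [hIT, satIdeal_mI hT, distrIdeal_mI hL]
    have hRHS : distrIdeal n K L I = DIdl L T := by rw [hIT, distrIdeal_mI hL]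
    rw [hLHS, hRHS]
    apply le_antisymm
    · -- easy direction
      apply Ideal.span_le.mpr
      rintro _ ⟨d, hd, rfl⟩
      obtain ⟨m, hm⟩ := hd
      rw [SetLike.mem_coe, mem_satIdeal_iff]
      exact ⟨m, satIdeal_of_colon_gens fun e he =>
        distrMon_mul_monomial_mem hL hT m d hm e he⟩
    · -- hard direction
      intro f hf
      obtain ⟨r, hr⟩ := (mem_satIdeal_iff _ f).mp hf
      set Ti : Fin n → Set (Fin n →₀ ℕ) :=
        fun i => {d : Fin n →₀ ℕ | ∃ m : ℕ, d + Finsupp.single i m ∈ satSet T} with hTidef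
      have hTsub : ∀ i, T ⊆ Ti i := by
        intro i d hd
        exact ⟨0, by rw [Finsupp.single_zero, add_zero]; exact subset_satSet T hd⟩
      have hTiUp : ∀ i, UpClosed (Ti i) := by
        rintro i d ⟨mm, hmm⟩ e
        refine ⟨mm, ?_⟩
        have heq : d + e + Finsupp.single i mm = d + Finsupp.single i mm + e := by
          rw [add_right_comm]
        rw [heq]
        exact hT' _ hmm e
      have hTierase : ∀ i, ∀ d ∈ Ti i, d.erase i ∈ Ti i := by
        rintro i d ⟨mm, hmm⟩
        refine ⟨d i + mm, ?_⟩
        have heq : d.erase i + Finsupp.single i (d i + mm)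
            = d + Finsupp.single i mm := by
          rw [Finsupp.single_add, ← add_assoc,
            add_comm (d.erase i) (Finsupp.single i (d i)), Finsupp.single_add_erase]
        rw [heq]
        exact hmm
      have hshift : ∀ i, {d : Fin n →₀ ℕ | Finsupp.single i r + d ∈ Ti i} = Ti i := by
        intro i
        ext d
        simp only [Set.mem_setOf_eq, hTidef]
        constructor
        · rintro ⟨mm, hmm⟩
          refine ⟨r + mm, ?_⟩
          have heq : d + Finsupp.single i (r + mm)
              = Finsupp.single i r + d + Finsupp.single i mm := by
            rw [Finsupp.single_add]
            abel
          rw [heq]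
          exact hmm
        · rintro ⟨mm, hmm⟩
          refine ⟨mm, ?_⟩
          have heq : Finsupp.single i r + d + Finsupp.single i mm
              = d + Finsupp.single i mm + Finsupp.single i r := by abel
          rw [heq]
          exact hT' _ hmm _
      have hfi : ∀ i, f ∈ DSp L (Ti i) := by
        intro i
        have h1 : f * distrMon n K L (Finsupp.single i r) ∈ DIdl L T :=
          hr _ (distrMon_single_mem_pow hL i r)
        have h1' : f * distrMon n K L (Finsupp.single i r) ∈ DSp L T := by
          have hmem : f * distrMon n K L (Finsupp.single i r)
              ∈ (DIdl L T : Set (MvPolynomial (Fin n) K)) := h1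
          rwa [coe_DIdl_eq_DSp hL hT] at hmem
        have h2 : f * distrMon n K L (Finsupp.single i r) ∈ DSp L (Ti i) :=
          Submodule.span_mono (Set.image_mono (hTsub i)) h1'
        have h3 := mem_DSp_shift hL (Finsupp.single i r) h2
        rw [hshift i] at h3
        have hrow : ∀ i', i' ≠ i → shiftMat (Finsupp.single i r) L i' = L i' := by
          intro i' hne
          funext j
          show L i' (j + Finsupp.single i r i') = L i' j
          rw [Finsupp.single_eq_of_ne' (Ne.symm hne), add_zero]
        have hrowEq : DSp (shiftMat (Finsupp.single i r) L) (Ti i) = DSp L (Ti i) :=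
          DSp_row_irrel (shiftMat_isDM hL _) hL i hrow (hTiUp i) (hTierase i)
        rwa [hrowEq] at h3
      obtain ⟨g, hg⟩ := DL_surjective hL f
      have hsupps : ∀ i, ↑g.support ⊆ Ti i := by
        intro i
        refine (DL_mem_span_iff hL _ g).mp ?_
        rw [hg]
        exact hfi i
      have hsubT' : ↑g.support ⊆ satSet T := by
        intro d hd
        exact mem_satSet_of_forall_single hT hn (fun i => hsupps i hd)
      have hfinal : f ∈ DSp L (satSet T) := by
        rw [← hg]
        exact (DL_mem_span_iff hL _ g).mpr hsubT'
      have hmem2 : f ∈ (DIdl L (satSet T) : Set (MvPolynomial (Fin n) K)) := by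
        rw [coe_DIdl_eq_DSp hL hT']
        exact hfinal
      exact hmem2
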